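/- The grand generating function F(u,x) = ∑_{n≥1} x^n φ_n(u), where φ_n(u) = (1/n!)∑_{p=1}^n ∑_{π∈S_n} u^{χ(π,p)} with χ the move-count statistic, satisfies F(u,x) = (u/(2-u))·[(1-x)^{-2} - (1-x)^{-u}] as formal power series. -/

import Mathlib

/-- The number of moves of a symbol in the Fisher–Yates algorithm, defined
recursively via the triangular decomposition.  At stage `k+1` (symbols
`0,…,k+1`), `q = π⁻¹(k+1)` is the position of the last symbol and
`σ = π ∘ τ(k+1,q)` fixes `k+1`.  The final trivial swap is counted (base
case `1`). -/
def movesAux {N : ℕ} : ℕ → Equiv.Perm (Fin N) → Fin N → ℕ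
  | 0, _, _ => 1
  | k + 1, π, p =>
    if h : k + 1 < N then
      let lst : Fin N := ⟨k + 1, h⟩
      let q := π⁻¹ lst
      if p = lst then
        if q = lst then 1 else 1 + movesAux k (π * Equiv.swap lst q) q
      else if p = q then 1 else movesAux k (π * Equiv.swap lst q) p
    else 1

/-- `moves π p` is the number of moves of symbol `p` (0-based; paper's symbol
`p+1`) when the Fisher–Yates algorithm produces `π ∈ Sₙ`. -/
def moves {n : ℕ} (π : Equiv.Perm (Fin n)) (p : Fin n) : ℕ :=
  movesAux (n - 1) π p

/-- `phi n p u` is the probability generating function `φ_{n,p}(u)` of the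
number of moves of symbol `p` (1-based) under Fisher–Yates on `n` symbols,
evaluated at `u`. -/
def phi (n p : ℕ) (u : ℚ) : ℚ :=
  if h : 1 ≤ p ∧ p ≤ n then
    (∑ π : Equiv.Perm (Fin n), u ^ moves π ⟨p - 1, by omega⟩) / n.factorial
  else 0


/-! Splitting off the last symbol through the triangular decomposition `π = σ · τ(k+1, q)`,
the last symbol moves once if `q = k+1` and otherwise once more than `q` does under `σ`,
while any other symbol `p` moves once if `p = q` and as under `σ` otherwise. Summing `u^χ` over
`q` and `σ` gives, for `G_k = (k+1)! φ_{k+1}(u)`, the recurrence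
`G_{k+1} = (u + k + 1) G_k + u (k + 2) (k + 1)!` with `G_0 = u`, solved by
`(2 - u) G_k = u ((k + 2)! - u (u + 1) ⋯ (u + k))`. -/

open Finset Equiv Nat

section FisherYates

variable {N : ℕ}

/-- A copy of `S_{k+1}` inside `Perm (Fin N)`: the recursion of `movesAux` keeps `N` fixed. -/
def fixAbove (N k : ℕ) : Finset (Perm (Fin N)) := {π | ∀ i : Fin N, k < i → π i = i}

def upTo (N k : ℕ) : Finset (Fin N) := {q | (q : ℕ) ≤ k}

@[simp]
lemma mem_fixAbove {k : ℕ} {π : Perm (Fin N)} :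
    π ∈ fixAbove N k ↔ ∀ i : Fin N, k < i → π i = i := by
  simp [fixAbove]

@[simp]
lemma mem_upTo {k : ℕ} {q : Fin N} : q ∈ upTo N k ↔ (q : ℕ) ≤ k := by
  simp [upTo]

lemma card_upTo {k : ℕ} (hk : k < N) : #(upTo N k) = k + 1 := by
  have : upTo N k = Iic ⟨k, hk⟩ := by ext q; simp [Fin.le_def]
  rw [this, Fin.card_Iic]

lemma fixAbove_zero : fixAbove N 0 = {1} := by
  ext π
  simp only [mem_fixAbove, mem_singleton]
  refine ⟨fun hπ => Perm.ext fun i => ?_, by rintro rfl i _; rfl⟩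
  by_cases hπi : 0 < (π i : ℕ)
  · exact π.injective (hπ _ hπi)
  · by_cases hi : 0 < (i : ℕ)
    · exact hπ i hi
    · exact Fin.ext (by simp only [Perm.coe_one, id_eq]; omega)

lemma fixAbove_eq_univ {k : ℕ} (hk : N ≤ k + 1) : fixAbove N k = univ := by
  ext π
  simpa using fun i hi => absurd i.isLt (by omega)

lemma upTo_eq_univ {k : ℕ} (hk : N ≤ k + 1) : upTo N k = univ := by
  ext q
  simpa using by omega

lemma inv_apply_of_mem_fixAbove {k : ℕ} {π : Perm (Fin N)} (hπ : π ∈ fixAbove N k)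
    {i : Fin N} (hi : k < i) : π⁻¹ i = i :=
  Perm.inv_eq_iff_eq.2 (mem_fixAbove.1 hπ i hi).symm

lemma inv_apply_mem_upTo {k : ℕ} {π : Perm (Fin N)} (hπ : π ∈ fixAbove N k)
    {i : Fin N} (hi : (i : ℕ) ≤ k) : π⁻¹ i ∈ upTo N k := by
  rw [mem_upTo]
  by_contra! hlt
  have hfix : π (π⁻¹ i) = π⁻¹ i := mem_fixAbove.1 hπ _ hlt
  rw [← Perm.mul_apply, mul_inv_cancel, Perm.one_apply] at hfix
  rw [← hfix] at hlt
  omega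

lemma upTo_succ {k : ℕ} (h : k + 1 < N) : upTo N (k + 1) = insert ⟨k + 1, h⟩ (upTo N k) := by
  ext q
  simp only [mem_upTo, mem_insert, Fin.ext_iff]
  omega

lemma mul_swap_mem_fixAbove_succ {k : ℕ} (h : k + 1 < N) {σ : Perm (Fin N)}
    (hσ : σ ∈ fixAbove N k) {q : Fin N} (hq : q ∈ upTo N (k + 1)) :
    σ * swap ⟨k + 1, h⟩ q ∈ fixAbove N (k + 1) := by
  rw [mem_upTo] at hq
  refine mem_fixAbove.2 fun i hi => ?_
  rw [Perm.mul_apply, swap_apply_of_ne_of_ne (by rintro rfl; simp at hi)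
    (by rintro rfl; omega)]
  exact mem_fixAbove.1 hσ i (by omega)

lemma mul_swap_inv_apply_mem_fixAbove {k : ℕ} (h : k + 1 < N) {π : Perm (Fin N)}
    (hπ : π ∈ fixAbove N (k + 1)) :
    π * swap ⟨k + 1, h⟩ (π⁻¹ ⟨k + 1, h⟩) ∈ fixAbove N k := by
  refine mem_fixAbove.2 fun i hi => ?_
  rcases (Nat.succ_le_of_lt hi).eq_or_lt with hlast | hgt
  · obtain rfl : i = ⟨k + 1, h⟩ := Fin.ext hlast.symm
    simp
  · have hq : π⁻¹ ⟨k + 1, h⟩ ≠ i := by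
      rintro hq
      rw [Perm.inv_eq_iff_eq, mem_fixAbove.1 hπ i hgt] at hq
      rw [← hq] at hgt
      simp at hgt
    rw [Perm.mul_apply, swap_apply_of_ne_of_ne (by rintro rfl; simp at hgt) hq.symm]
    exact mem_fixAbove.1 hπ i hgt

lemma mul_swap_inv_apply {k : ℕ} (h : k + 1 < N) {σ : Perm (Fin N)} (hσ : σ ∈ fixAbove N k)
    (q : Fin N) : (σ * swap ⟨k + 1, h⟩ q)⁻¹ ⟨k + 1, h⟩ = q := by
  rw [mul_inv_rev, Perm.mul_apply, inv_apply_of_mem_fixAbove hσ (by simp), swap_inv,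
    swap_apply_left]

/-- The triangular decomposition `π = σ * τ(k + 1, q)`, with `q = π⁻¹ (k + 1)`. -/
lemma sum_fixAbove_succ {M : Type*} [AddCommMonoid M] {k : ℕ} (h : k + 1 < N)
    (f : Perm (Fin N) → M) :
    ∑ π ∈ fixAbove N (k + 1), f π =
      ∑ q ∈ upTo N (k + 1), ∑ σ ∈ fixAbove N k, f (σ * swap ⟨k + 1, h⟩ q) := by
  rw [← sum_product']
  refine sum_nbij' (fun π => (π⁻¹ ⟨k + 1, h⟩, π * swap ⟨k + 1, h⟩ (π⁻¹ ⟨k + 1, h⟩)))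
    (fun x => x.2 * swap ⟨k + 1, h⟩ x.1) ?_ ?_ ?_ ?_ ?_
  · exact fun π hπ => mem_product.2
      ⟨inv_apply_mem_upTo hπ le_rfl, mul_swap_inv_apply_mem_fixAbove h hπ⟩
  · exact fun x hx => mul_swap_mem_fixAbove_succ h (mem_product.1 hx).2 (mem_product.1 hx).1
  · simp [mul_assoc]
  · rintro ⟨q, σ⟩ hx
    simp only [mul_swap_inv_apply h (mem_product.1 hx).2, mul_assoc, swap_mul_self, mul_one]
  · simp [mul_assoc]

lemma card_fixAbove {k : ℕ} (hk : k < N) : #(fixAbove N k) = (k + 1)! := by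
  induction k with
  | zero => simp [fixAbove_zero]
  | succ k ih =>
    have hcount := sum_fixAbove_succ hk (fun _ => 1)
    simp only [sum_const, smul_eq_mul, mul_one] at hcount
    rw [hcount, card_upTo hk, ih (by omega), Nat.factorial_succ (k + 1)]

lemma movesAux_mul_swap {k : ℕ} (h : k + 1 < N) {σ : Perm (Fin N)} (hσ : σ ∈ fixAbove N k)
    (q p : Fin N) :
    movesAux (k + 1) (σ * swap ⟨k + 1, h⟩ q) p =
      if p = ⟨k + 1, h⟩ then (if q = ⟨k + 1, h⟩ then 1 else 1 + movesAux k σ q)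
      else if p = q then 1 else movesAux k σ p := by
  rw [movesAux, dif_pos h]
  simp only [mul_swap_inv_apply h hσ, mul_assoc, swap_mul_self, mul_one]

variable {R : Type*}

/-- `(k + 1)! · φ_{k+1}(u)` on the copy `fixAbove N k` of `S_{k+1}`. -/
def movesSum [CommSemiring R] (N k : ℕ) (u : R) : R :=
  ∑ p ∈ upTo N k, ∑ π ∈ fixAbove N k, u ^ movesAux k π p

section CommSemiring

variable [CommSemiring R] (u : R)

lemma movesSum_zero (hN : 0 < N) : movesSum N 0 u = u := by
  have : upTo N 0 = {⟨0, hN⟩} := by ext q; simp [Fin.ext_iff]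
  simp [movesSum, this, fixAbove_zero, movesAux]

lemma sum_pow_movesAux_succ {k : ℕ} (h : k + 1 < N) (p : Fin N) :
    ∑ π ∈ fixAbove N (k + 1), u ^ movesAux (k + 1) π p =
      ∑ q ∈ upTo N (k + 1), ∑ σ ∈ fixAbove N k,
        u ^ (if p = ⟨k + 1, h⟩ then (if q = ⟨k + 1, h⟩ then 1 else 1 + movesAux k σ q)
          else if p = q then 1 else movesAux k σ p) := by
  rw [sum_fixAbove_succ h]
  exact sum_congr rfl fun q _ => sum_congr rfl fun σ hσ => by rw [movesAux_mul_swap h hσ]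

lemma sum_pow_movesAux_succ_last {k : ℕ} (h : k + 1 < N) :
    ∑ π ∈ fixAbove N (k + 1), u ^ movesAux (k + 1) π ⟨k + 1, h⟩ =
      (k + 1)! * u + u * movesSum N k u := by
  have hlast : (⟨k + 1, h⟩ : Fin N) ∉ upTo N k := by simp
  rw [sum_pow_movesAux_succ u h, upTo_succ h, sum_insert hlast, movesSum, mul_sum]
  simp only [↓reduceIte, pow_one, sum_const, card_fixAbove (Nat.lt_of_succ_lt h), nsmul_eq_mul]
  refine congrArg _ (sum_congr rfl fun q hq => ?_)
  have hq_ne : q ≠ ⟨k + 1, h⟩ := by rintro rfl; exact hlast hq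
  simp only [hq_ne, ↓reduceIte, pow_add, pow_one, mul_sum]

lemma sum_pow_movesAux_succ_of_le {k : ℕ} (h : k + 1 < N) {p : Fin N} (hp : p ∈ upTo N k) :
    ∑ π ∈ fixAbove N (k + 1), u ^ movesAux (k + 1) π p =
      (k + 1) * ∑ σ ∈ fixAbove N k, u ^ movesAux k σ p + (k + 1)! * u := by
  have hp_ne : p ≠ ⟨k + 1, h⟩ := by rintro rfl; simp at hp
  have hp' : p ∈ upTo N (k + 1) := by rw [upTo_succ h]; exact mem_insert_of_mem hp
  have hrest : ∑ q ∈ (upTo N (k + 1)).erase p, ∑ σ ∈ fixAbove N k,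
      u ^ (if p = q then 1 else movesAux k σ p) =
        (k + 1) * ∑ σ ∈ fixAbove N k, u ^ movesAux k σ p := by
    rw [sum_congr rfl fun q hq => sum_congr rfl fun σ _ => by
      rw [if_neg (ne_of_mem_erase hq).symm], sum_const,
      card_erase_of_mem hp', card_upTo h, nsmul_eq_mul]
    push_cast
    ring
  rw [sum_pow_movesAux_succ u h, ← add_sum_erase _ _ hp', add_comm]
  simp only [hp_ne, ↓reduceIte, hrest, pow_one, sum_const,
    card_fixAbove (Nat.lt_of_succ_lt h), nsmul_eq_mul]

lemma movesSum_succ {k : ℕ} (h : k + 1 < N) :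
    movesSum N (k + 1) u = (u + k + 1) * movesSum N k u + u * (k + 2) * (k + 1)! := by
  have hlast : (⟨k + 1, h⟩ : Fin N) ∉ upTo N k := by simp
  rw [movesSum, upTo_succ h, sum_insert hlast, sum_pow_movesAux_succ_last u h,
    sum_congr rfl fun p hp => sum_pow_movesAux_succ_of_le u h hp, sum_add_distrib, ← mul_sum,
    sum_const, card_upTo (Nat.lt_of_succ_lt h), nsmul_eq_mul]
  push_cast
  rw [movesSum]
  ring

end CommSemiring

lemma two_sub_mul_movesSum [CommRing R] (u : R) {k : ℕ} (hk : k < N) :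
    (2 - u) * movesSum N k u = u * ((k + 2)! - ∏ j ∈ range (k + 1), (u + j)) := by
  induction k with
  | zero =>
    rw [movesSum_zero u hk]
    simp only [zero_add, factorial_two, cast_ofNat, range_one, prod_singleton, cast_zero, add_zero]
    ring
  | succ k ih =>
    have ih := ih (by omega)
    rw [Nat.factorial_succ (k + 1)] at ih
    rw [movesSum_succ u hk, prod_range_succ, Nat.factorial_succ (k + 2),
      Nat.factorial_succ (k + 1)]
    push_cast at ih ⊢
    linear_combination (u + k + 1) * ih

lemma two_sub_mul_sum_pow_moves [CommRing R] (u : R) (n : ℕ) :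
    (2 - u) * ∑ p : Fin n, ∑ π : Perm (Fin n), u ^ moves π p =
      u * ((n + 1)! - ∏ j ∈ range n, (u + j)) := by
  cases n with
  | zero => simp
  | succ m =>
    have h := two_sub_mul_movesSum u (Nat.lt_succ_self m)
    rwa [movesSum, upTo_eq_univ le_rfl, fixAbove_eq_univ le_rfl] at h

end FisherYates

theorem grand_pgf_moves_general (n : ℕ) (u : ℚ) (hu : u ≠ 2) :
    (∑ p : Fin n, ∑ π : Equiv.Perm (Fin n), u ^ moves π p) / n.factorial =
      (u / (2 - u)) *
        (((n : ℚ) + 1) - (∏ j ∈ Finset.range n, (u + j)) / n.factorial) := by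
  have h2u : (2 : ℚ) - u ≠ 0 := sub_ne_zero.2 hu.symm
  have key := two_sub_mul_sum_pow_moves u n
  rw [Nat.factorial_succ] at key
  field_simp
  push_cast at key ⊢
  linear_combination key

/-- The grand generating function `F(u,x) = ∑_{n≥1} x^n φ_n(u)`, where
`φ_n(u) = (1/n!) ∑_{p=1}^n ∑_{π∈Sₙ} u^{χ(π,p)}`, equals
`(u/(2-u))·[(1-x)^{-2} - (1-x)^{-u}]` as a formal power series in `x`:
coefficientwise, for every `n ≥ 1`,
`φ_n(u) = (u/(2-u))·[(n+1) - u(u+1)⋯(u+n-1)/n!]` (for every `u ≠ 2`). -/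
theorem grand_pgf_moves (n : ℕ) (hn : 1 ≤ n) (u : ℚ) (hu : u ≠ 2) :
    (∑ p : Fin n, ∑ π : Equiv.Perm (Fin n), u ^ moves π p) / n.factorial =
      (u / (2 - u)) *
        (((n : ℚ) + 1) - (∏ j ∈ Finset.range n, (u + j)) / n.factorial) :=
  grand_pgf_moves_general n u hu
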